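/- arXiv:1303.5104 — 4 statements merged into one kernel-verified Lean document; each statement's English description precedes it below -/
import Mathlib

section
/- Let (Rₙ)ₙ be a sequence of i.i.d. real-valued, nonnegative random variables such that log(Rₙ) is square-integrable, and define Yₙ₊₁ = Rₙ · Yₙ with |Y₀| ≠ 0 almost surely and Y₀ independent of the Rₙ. If E[log(R₀)] < 0 then |Yₙ| → 0 almost surely as n → ∞. -/
/-!
Taking logarithms turns the product `∏ Rᵢ` into the random walk `∑ log Rᵢ`. By the strong law of
large numbers its averages converge almost surely to `E[log R₀] < 0`, so the walk drifts to `-∞`,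
and `0 ≤ ∏ Rᵢ ≤ exp (∑ log Rᵢ) → 0`.
-/

open MeasureTheory ProbabilityTheory Filter Topology

theorem Filter.tendsto_atBot_of_tendsto_div_natCast_neg {𝕜 : Type*} [Field 𝕜] [LinearOrder 𝕜]
    [IsStrictOrderedRing 𝕜] [Archimedean 𝕜] [TopologicalSpace 𝕜] [OrderTopology 𝕜]
    {s : ℕ → 𝕜} {m : 𝕜} (hm : m < 0) (hs : Tendsto (fun n => s n / n) atTop (𝓝 m)) :
    Tendsto s atTop atBot := by
  refine (hs.neg_mul_atTop hm tendsto_natCast_atTop_atTop).congr' ?_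
  filter_upwards [eventually_ne_atTop 0] with n hn
  exact div_mul_cancel₀ (s n) (Nat.cast_ne_zero.mpr hn)

theorem Finset.prod_le_exp_sum_log {ι : Type*} (s : Finset ι) {x : ι → ℝ} (hx : ∀ i ∈ s, 0 ≤ x i) :
    ∏ i ∈ s, x i ≤ Real.exp (∑ i ∈ s, Real.log (x i)) := by
  rw [Real.exp_sum]
  exact Finset.prod_le_prod hx fun i _ => Real.le_exp_log (x i)

theorem tendsto_prod_range_zero_of_tendsto_sum_log_atBot {x : ℕ → ℝ} (hx : ∀ n, 0 ≤ x n)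
    (hlog : Tendsto (fun n => ∑ i ∈ Finset.range n, Real.log (x i)) atTop atBot) :
    Tendsto (fun n => ∏ i ∈ Finset.range n, x i) atTop (𝓝 0) :=
  squeeze_zero (fun _ => Finset.prod_nonneg fun i _ => hx i)
    (fun _ => Finset.prod_le_exp_sum_log _ fun i _ => hx i) (Real.tendsto_exp_atBot.comp hlog)

theorem stmt2_general {Ω : Type*} [MeasureSpace Ω] [IsProbabilityMeasure (ℙ : Measure Ω)]
    (R : ℕ → Ω → ℝ)
    (hnn : ∀ n ω, 0 ≤ R n ω)
    (hindep : iIndepFun R ℙ)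
    (hid : ∀ n, IdentDistrib (R n) (R 0) ℙ ℙ)
    (hL2 : MemLp (fun ω => Real.log (R 0 ω)) 2 ℙ)
    (Y : ℕ → Ω → ℝ)
    (hY : ∀ n ω, Y n ω = (∏ i ∈ Finset.range n, R i ω) * Y 0 ω)
    (hneg : ∫ ω, Real.log (R 0 ω) ∂ℙ < 0) :
    ∀ᵐ ω ∂ℙ, Tendsto (fun n => |Y n ω|) atTop (nhds 0) := by
  have hslln := strong_law_ae_real (fun n ω => Real.log (R n ω)) (hL2.integrable one_le_two)
    (fun i j hij => (hindep.indepFun hij).comp Real.measurable_log Real.measurable_log)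
    (fun n => (hid n).comp Real.measurable_log)
  filter_upwards [hslln] with ω hω
  have hprod := tendsto_prod_range_zero_of_tendsto_sum_log_atBot (fun n => hnn n ω)
    (tendsto_atBot_of_tendsto_div_natCast_neg hneg hω)
  simpa only [abs_zero, zero_mul, ← abs_mul, ← hY] using hprod.abs.mul_const |Y 0 ω|

theorem stmt2 {Ω : Type*} [MeasureSpace Ω] [IsProbabilityMeasure (ℙ : Measure Ω)]
    (R : ℕ → Ω → ℝ) (hmeas : ∀ n, Measurable (R n))
    (hnn : ∀ n ω, 0 ≤ R n ω)
    (hindep : iIndepFun R ℙ)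
    (hid : ∀ n, IdentDistrib (R n) (R 0) ℙ ℙ)
    (hL2 : MemLp (fun ω => Real.log (R 0 ω)) 2 ℙ)
    (Y : ℕ → Ω → ℝ)
    (hY : ∀ n ω, Y n ω = (∏ i ∈ Finset.range n, R i ω) * Y 0 ω)
    (hY0 : ∀ᵐ ω ∂ℙ, Y 0 ω ≠ 0)
    (hYindep : ∀ n, IndepFun (Y 0) (R n) ℙ)
    (hneg : ∫ ω, Real.log (R 0 ω) ∂ℙ < 0) :
    ∀ᵐ ω ∂ℙ, Tendsto (fun n => |Y n ω|) atTop (nhds 0) :=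
  stmt2_general R hnn hindep hid hL2 Y hY hneg
end

section
/- Let R be a random variable of the form R = Γ + Σ·ξ where Γ, Σ ∈ ℂ and ξ satisfies P(ξ = √3) = P(ξ = -√3) = 1/6 and P(ξ = 0) = 2/3. Then E[log|R|] = (1/6)·log(|Γ² - 3Σ²|·|Γ|⁴). In particular E[log|R|] < 0 if and only if |Γ² - 3Σ²|·|Γ|⁴ < 1. -/
/-!
Almost surely `ξ` takes one of the values `√3, -√3, 0`, so the expectation is the weighted sum
`(1/6) log ‖G + √3 S‖ + (1/6) log ‖G - √3 S‖ + (2/3) log ‖G‖`. Since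
`G² - 3S² = (G + √3 S)(G - √3 S)` and none of the three factors vanishes, this is
`(1/6) log (‖G² - 3S²‖ ‖G‖⁴)`, which is negative exactly when its argument is below `1`.
-/

open MeasureTheory ProbabilityTheory

section FiniteRange

variable {Ω α E : Type*} [MeasurableSpace Ω] [MeasurableSpace α] [MeasurableSingletonClass α]
  {μ : Measure Ω} {X : Ω → α}

theorem ae_mem_finset_of_sum_measure_preimage_eq_one [IsProbabilityMeasure μ] (hX : Measurable X)
    (s : Finset α) (h : ∑ x ∈ s, μ (X ⁻¹' {x}) = 1) : ∀ᵐ ω ∂μ, X ω ∈ s := by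
  rw [sum_measure_preimage_singleton s fun x _ ↦ hX (measurableSet_singleton x)] at h
  exact (mem_ae_iff_prob_eq_one (hX s.measurableSet)).2 h

theorem integral_comp_eq_sum_of_ae_mem_finset [NormedAddCommGroup E] [NormedSpace ℝ E]
    [CompleteSpace E] [IsFiniteMeasure μ] (hX : Measurable X) {s : Finset α}
    (hs : ∀ᵐ ω ∂μ, X ω ∈ s) (f : α → E) :
    ∫ ω, f (X ω) ∂μ = ∑ x ∈ s, μ.real (X ⁻¹' {x}) • f x := by
  have hfiber (x : α) : MeasurableSet (X ⁻¹' {x}) := hX (measurableSet_singleton x)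
  have hsimple : (fun ω ↦ f (X ω)) =ᵐ[μ] fun ω ↦ ∑ x ∈ s, (X ⁻¹' {x}).indicator (fun _ ↦ f x) ω := by
    filter_upwards [hs] with ω hω
    rw [Finset.sum_eq_single_of_mem (X ω) hω fun x _ hx ↦
      Set.indicator_of_notMem (fun h ↦ hx h.symm) _]
    exact (Set.indicator_of_mem (Set.mem_singleton _) _).symm
  rw [integral_congr_ae hsimple,
    integral_finsetSum s fun x _ ↦ (integrable_const (f x)).indicator (hfiber x)]
  exact Finset.sum_congr rfl fun x _ ↦ integral_indicator_const (f x) (hfiber x)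

end FiniteRange

theorem integral_comp_of_threePointLaw {Ω : Type*} [MeasurableSpace Ω] {μ : Measure Ω}
    [IsProbabilityMeasure μ] {ξ : Ω → ℝ} (hξ : Measurable ξ)
    (h1 : μ (ξ ⁻¹' {√3}) = 1 / 6) (h2 : μ (ξ ⁻¹' {-√3}) = 1 / 6)
    (h3 : μ (ξ ⁻¹' {0}) = 2 / 3) (f : ℝ → ℝ) :
    ∫ ω, f (ξ ω) ∂μ = 1 / 6 * f √3 + 1 / 6 * f (-√3) + 2 / 3 * f 0 := by
  have hsqrt : √3 ≠ 0 := by positivity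
  have hdistinct : √3 ∉ ({-√3, 0} : Finset ℝ) ∧ -√3 ∉ ({0} : Finset ℝ) := by
    simp [hsqrt, self_ne_neg.mpr hsqrt]
  have hsupport : ∀ᵐ ω ∂μ, ξ ω ∈ ({√3, -√3, 0} : Finset ℝ) := by
    refine ae_mem_finset_of_sum_measure_preimage_eq_one hξ _ ?_
    rw [Finset.sum_insert hdistinct.1, Finset.sum_insert hdistinct.2, Finset.sum_singleton,
      h1, h2, h3, ← ENNReal.toReal_eq_one_iff, ENNReal.toReal_add (by finiteness) (by finiteness),
      ENNReal.toReal_add (by finiteness) (by finiteness)]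
    norm_num [ENNReal.toReal_div]
  rw [integral_comp_eq_sum_of_ae_mem_finset hξ hsupport, Finset.sum_insert hdistinct.1,
    Finset.sum_insert hdistinct.2, Finset.sum_singleton]
  simp only [measureReal_def, h1, h2, h3, ENNReal.toReal_div, smul_eq_mul]
  norm_num [add_assoc]

theorem norm_sq_sub_three_mul_sq (G S : ℂ) :
    ‖G ^ 2 - 3 * S ^ 2‖ = ‖G + (√3 : ℂ) * S‖ * ‖G - (√3 : ℂ) * S‖ := by
  have h3 : ((√3 : ℝ) : ℂ) ^ 2 = 3 := by exact_mod_cast Real.sq_sqrt zero_le_three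
  rw [← norm_mul]
  congr 1
  linear_combination S ^ 2 * h3

theorem log_norm_sq_sub_three_mul_sq_mul_pow_four {G S : ℂ} (hG : G ≠ 0)
    (hp : G + (√3 : ℂ) * S ≠ 0) (hm : G - (√3 : ℂ) * S ≠ 0) :
    Real.log (‖G ^ 2 - 3 * S ^ 2‖ * ‖G‖ ^ 4) =
      Real.log ‖G + (√3 : ℂ) * S‖ + Real.log ‖G - (√3 : ℂ) * S‖ + 4 * Real.log ‖G‖ := by
  rw [norm_sq_sub_three_mul_sq, Real.log_mul (by positivity) (by positivity),
    Real.log_mul (by positivity) (by positivity), Real.log_pow]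
  push_cast
  ring

theorem stmt5 {Ω : Type*} [MeasureSpace Ω] [IsProbabilityMeasure (ℙ : Measure Ω)]
    (ξ : Ω → ℝ) (hmeas : Measurable ξ)
    (h1 : ℙ {ω | ξ ω = Real.sqrt 3} = 1 / 6)
    (h2 : ℙ {ω | ξ ω = -Real.sqrt 3} = 1 / 6)
    (h3 : ℙ {ω | ξ ω = 0} = 2 / 3)
    (G S : ℂ) (hG : G ≠ 0)
    (hp : G + (Real.sqrt 3 : ℂ) * S ≠ 0) (hm : G - (Real.sqrt 3 : ℂ) * S ≠ 0) :
    ∫ ω, Real.log (‖G + S * (ξ ω : ℂ)‖) ∂ℙ =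
      (1 / 6) * Real.log (‖G ^ 2 - 3 * S ^ 2‖ * ‖G‖ ^ 4) ∧
    (∫ ω, Real.log (‖G + S * (ξ ω : ℂ)‖) ∂ℙ < 0 ↔
      ‖G ^ 2 - 3 * S ^ 2‖ * ‖G‖ ^ 4 < 1) := by
  have hE : ∫ ω, Real.log ‖G + S * (ξ ω : ℂ)‖ ∂ℙ =
      1 / 6 * Real.log (‖G ^ 2 - 3 * S ^ 2‖ * ‖G‖ ^ 4) := by
    rw [integral_comp_of_threePointLaw hmeas h1 h2 h3 fun x ↦ Real.log ‖G + S * (x : ℂ)‖,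
      log_norm_sq_sub_three_mul_sq_mul_pow_four hG hp hm]
    push_cast
    ring_nf
  have hpos : 0 < ‖G ^ 2 - 3 * S ^ 2‖ * ‖G‖ ^ 4 := by
    rw [norm_sq_sub_three_mul_sq]
    positivity
  refine ⟨hE, ?_⟩
  rw [hE, ← Real.log_neg_iff hpos]
  constructor <;> intro h <;> linarith
end

section
/- Let ξ satisfy P(ξ = ±√3) = 1/6, P(ξ = 0) = 2/3, and let R = (Γ - Λ) + Σ·ξ + Λ·ξ², with Γ, Σ, Λ ∈ ℂ. Then E[|R|²] = |Γ|² + |Σ|² + 2|Λ|². -/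
/-!
The atoms carry total mass `1/6 + 1/6 + 2/3 = 1`, so almost surely `ξ ∈ {√3, -√3, 0}` and
`f ∘ ξ` agrees a.e. with the simple function `∑ₓ f x • 1{ξ = x}`; the expectation is therefore
a three-term average, evaluated by expanding `|·|²` in real and imaginary parts with `√3 ^ 2 = 3`.
-/

open MeasureTheory ProbabilityTheory
open scoped ENNReal

section FiniteRange

variable {Ω β E : Type*} [MeasurableSpace Ω] [MeasurableSpace β] [MeasurableSingletonClass β]
  {μ : Measure Ω} {ξ : Ω → β}

theorem ae_mem_of_sum_measure_preimage_singleton_eq_one [IsProbabilityMeasure μ]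
    (hξ : Measurable ξ) {s : Finset β} (hs : ∑ x ∈ s, μ (ξ ⁻¹' {x}) = 1) :
    ∀ᵐ ω ∂μ, ξ ω ∈ s := by
  rw [sum_measure_preimage_singleton s fun x _ ↦ hξ (measurableSet_singleton x)] at hs
  exact (prob_compl_eq_zero_iff (hξ s.measurableSet)).2 hs

theorem integral_comp_eq_sum_of_ae_mem [NormedAddCommGroup E] [NormedSpace ℝ E] [CompleteSpace E]
    [IsFiniteMeasure μ] (hξ : Measurable ξ) {s : Finset β} (hs : ∀ᵐ ω ∂μ, ξ ω ∈ s) (f : β → E) :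
    ∫ ω, f (ξ ω) ∂μ = ∑ x ∈ s, μ.real (ξ ⁻¹' {x}) • f x := by
  have hfiber (x : β) : MeasurableSet (ξ ⁻¹' {x}) := hξ (measurableSet_singleton x)
  have hsimple : (fun ω ↦ f (ξ ω)) =ᵐ[μ]
      fun ω ↦ ∑ x ∈ s, (ξ ⁻¹' {x}).indicator (fun _ ↦ f x) ω := by
    filter_upwards [hs] with ω hω
    rw [Finset.sum_eq_single_of_mem (ξ ω) hω,
      Set.indicator_of_mem (show ω ∈ ξ ⁻¹' {ξ ω} from rfl)]
    exact fun x _ hx ↦ Set.indicator_of_notMem (fun h ↦ hx h.symm) _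
  rw [integral_congr_ae hsimple,
    integral_finsetSum s fun x _ ↦ (integrable_const (f x)).indicator (hfiber x)]
  exact Finset.sum_congr rfl fun x _ ↦ integral_indicator_const _ (hfiber x)

end FiniteRange

theorem three_point_average_norm_sq (G S L : ℂ) :
    (1 / 6 : ℝ) * ‖G - L + S * √3 + L * (√3 : ℝ) ^ 2‖ ^ 2
      + ((1 / 6 : ℝ) * ‖G - L + S * (-√3 : ℝ) + L * (-√3 : ℝ) ^ 2‖ ^ 2
      + (2 / 3 : ℝ) * ‖G - L + S * (0 : ℝ) + L * (0 : ℝ) ^ 2‖ ^ 2)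
      = ‖G‖ ^ 2 + ‖S‖ ^ 2 + 2 * ‖L‖ ^ 2 := by
  have hsq : ((√3 : ℝ) : ℂ) ^ 2 = 3 := by norm_cast; simp
  simp only [Complex.ofReal_neg, neg_sq, hsq, Complex.ofReal_zero, mul_zero, add_zero,
    zero_pow two_ne_zero]
  simp only [Complex.sq_norm, Complex.normSq_apply, Complex.add_re, Complex.add_im,
    Complex.sub_re, Complex.sub_im, Complex.mul_re, Complex.mul_im, Complex.ofReal_re,
    Complex.ofReal_im, Complex.neg_re, Complex.neg_im]
  norm_num
  linear_combination (S.re ^ 2 + S.im ^ 2) / 3 * Real.sq_sqrt (show (0 : ℝ) ≤ 3 by norm_num)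

theorem stmt7 {Ω : Type*} [MeasureSpace Ω] [IsProbabilityMeasure (ℙ : Measure Ω)]
    (ξ : Ω → ℝ) (hmeas : Measurable ξ)
    (h1 : ℙ {ω | ξ ω = Real.sqrt 3} = 1 / 6)
    (h2 : ℙ {ω | ξ ω = -Real.sqrt 3} = 1 / 6)
    (h3 : ℙ {ω | ξ ω = 0} = 2 / 3)
    (G S L : ℂ) :
    ∫ ω, ‖(G - L) + S * (ξ ω : ℂ) + L * (ξ ω : ℂ) ^ 2‖ ^ 2 ∂ℙ =
      ‖G‖ ^ 2 + ‖S‖ ^ 2 + 2 * ‖L‖ ^ 2 := by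
  have hsqrt3 : (0 : ℝ) < √3 := by positivity
  have hfresh : √3 ∉ ({-√3, 0} : Finset ℝ) := by
    simp only [Finset.mem_insert, Finset.mem_singleton]
    rintro (h | h) <;> linarith
  have hsupp : ∀ᵐ ω, ξ ω ∈ ({√3, -√3, 0} : Finset ℝ) := by
    refine ae_mem_of_sum_measure_preimage_singleton_eq_one hmeas ?_
    rw [Finset.sum_insert hfresh, Finset.sum_pair (neg_ne_zero.2 hsqrt3.ne')]
    simp only [Set.preimage, Set.mem_singleton_iff, h1, h2, h3]
    rw [← ENNReal.toReal_eq_toReal_iff' (by finiteness) (by simp),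
      ENNReal.toReal_add, ENNReal.toReal_add] <;> norm_num <;> finiteness
  rw [integral_comp_eq_sum_of_ae_mem hmeas hsupp
      fun x : ℝ ↦ ‖(G - L) + S * (x : ℂ) + L * (x : ℂ) ^ 2‖ ^ 2,
    Finset.sum_insert hfresh, Finset.sum_pair (neg_ne_zero.2 hsqrt3.ne')]
  simp only [measureReal_def, Set.preimage, Set.mem_singleton_iff, h1, h2, h3, smul_eq_mul,
    ENNReal.toReal_div, ENNReal.toReal_one, ENNReal.toReal_ofNat]
  exact three_point_average_norm_sq G S L
end

section
/- The stochastic theta method with θ = 1/2 is A-stable with respect to mean-square stability: whenever λ, μ ∈ ℂ satisfy 2·Re(λ) + |μ|² < 0 and h > 0 (with λh ≠ 2), the MS-stability function satisfies |Γ|² + |Σ|² < 1 where Γ = (1 + λh/2)/(1 - λh/2) and Σ = μ√h/(1 - λh/2). -/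
/-! The Cayley transform `z ↦ (1 + z)/(1 - z)` maps the left half-plane into the unit disc, and
quantitatively `‖1 + z‖² = ‖1 - z‖² + 4 Re z`. With `z = λh/2` this turns the claim into
`h (2 Re λ + ‖μ‖²) < 0` after clearing the common denominator `‖1 - λh/2‖²`. -/

theorem Complex.norm_one_add_sq_eq (z : ℂ) : ‖1 + z‖ ^ 2 = ‖1 - z‖ ^ 2 + 4 * z.re := by
  simp only [← Complex.normSq_eq_norm_sq, Complex.normSq_apply, Complex.add_re, Complex.add_im,
    Complex.sub_re, Complex.sub_im, Complex.one_re, Complex.one_im]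
  ring

theorem Complex.norm_mul_sqrt_sq (m : ℂ) {h : ℝ} (hh : 0 ≤ h) :
    ‖m * (Real.sqrt h : ℂ)‖ ^ 2 = ‖m‖ ^ 2 * h := by
  rw [norm_mul, mul_pow, Complex.norm_real, Real.norm_eq_abs, sq_abs, Real.sq_sqrt hh]

theorem stmt10_general (l m : ℂ) (h : ℝ) (hh : 0 < h)
    (hstab : 2 * l.re + ‖m‖ ^ 2 < 0) :
    ‖(1 + l * h / 2) / (1 - l * h / 2)‖ ^ 2 +
      ‖m * Real.sqrt h / (1 - l * h / 2)‖ ^ 2 < 1 := by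
  have hre : (l * h / 2).re = l.re * h / 2 := by simp
  have hl : l.re < 0 := by nlinarith [sq_nonneg ‖m‖]
  have hden : 0 < ‖1 - l * h / 2‖ := by
    refine norm_pos_iff.mpr fun hz ↦ ?_
    have : (1 - l * h / 2).re = 0 := by rw [hz, Complex.zero_re]
    rw [Complex.sub_re, Complex.one_re, hre] at this
    linarith [mul_neg_of_neg_of_pos hl hh]
  rw [norm_div, norm_div, div_pow, div_pow, ← add_div, div_lt_one (pow_pos hden 2),
    Complex.norm_one_add_sq_eq, Complex.norm_mul_sqrt_sq m hh.le, hre]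
  linarith [mul_neg_of_pos_of_neg hh hstab]

theorem stmt10 (l m : ℂ) (h : ℝ) (hh : 0 < h) (hne : l * (h : ℂ) ≠ 2)
    (hstab : 2 * l.re + ‖m‖ ^ 2 < 0) :
    ‖(1 + l * h / 2) / (1 - l * h / 2)‖ ^ 2 +
      ‖m * Real.sqrt h / (1 - l * h / 2)‖ ^ 2 < 1 :=
  stmt10_general l m h hh hstab
end
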